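/- arXiv:1609.04029 — 2 statements merged into one kernel-verified Lean document; each statement's English description precedes it below -/
import Mathlib

section
/- In a rooted forest in which every vertex has at most two children, if v is an X-bifurcate vertex (both children of v have descendants in X), then v has exactly two X-children, where an X-child of v is a descendant u of v such that every edge branching off the path from v to u leads to an X-exclusive subtree and u is either in X or X-bifurcate. -/
/-- A rooted forest: each vertex has an optional parent, with no infinite
ancestor chains. -/
structure RForest (V : Type) where
  parent : V → Option V
  wf : WellFounded fun a b : V => parent b = some a

namespace RForest

variable {V : Type}

/-- `a` is a (weak) ancestor of `x`, i.e. `x` is a descendant of `a`. -/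
def Anc (F : RForest V) (x a : V) : Prop :=
  Relation.ReflTransGen (fun c p => F.parent c = some p) x a

/-- the set of children of `v`. -/
def children (F : RForest V) (v : V) : Set V := {c | F.parent c = some v}

/-- `v` is a leaf. -/
def IsLeaf (F : RForest V) (v : V) : Prop := F.children v = ∅

/-- `v` is `X`-inclusive: it has a descendant in `X`. -/
def XIncl (F : RForest V) (X : Set V) (v : V) : Prop := ∃ x ∈ X, F.Anc x v

/-- `v` is `X`-bifurcate: a non-leaf both of whose children are `X`-inclusive. -/
def XBif (F : RForest V) (X : Set V) (v : V) : Prop :=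
  ∃ c₁ c₂, c₁ ≠ c₂ ∧ F.parent c₁ = some v ∧ F.parent c₂ = some v ∧
    F.XIncl X c₁ ∧ F.XIncl X c₂

/-- `u` is an `X`-child of `v`: a proper descendant `u` of `v` such that every
edge `(p,c)` branching off the path from `v` down to `u` (at an inner vertex
`p`) has an `X`-exclusive head `c`, and `u ∈ X` or `u` is `X`-bifurcate. -/
def XChild (F : RForest V) (X : Set V) (v u : V) : Prop :=
  F.Anc u v ∧ u ≠ v ∧
    (∀ p c, F.parent c = some p → F.Anc u p → F.Anc p v → p ≠ u → p ≠ v →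
      ¬ F.Anc u c → ¬ F.XIncl X c) ∧
    (u ∈ X ∨ F.XBif X u)

end RForest

/-!
Call `u` the `X`-tip of an `X`-inclusive vertex `w` if `u` is the first vertex below `w` that lies
in `X` or is `X`-bifurcate, reached by always stepping to the unique `X`-inclusive child. It exists
and is unique: stop at once if `w ∈ X` (a leaf) or `w` is `X`-bifurcate, and otherwise pass to the
only `X`-inclusive child, which is closer to a fixed element of `X` below `w`. The `X`-children of
`v` are exactly the `X`-tips of its children; a binary `X`-bifurcate `v` has exactly two children,
both `X`-inclusive, and their tips lie in disjoint subtrees.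
-/

namespace RForest

variable {V : Type} {F : RForest V} {X : Set V}

theorem anc_of_parent {c w : V} (h : F.parent c = some w) : F.Anc c w :=
  Relation.ReflTransGen.single h

theorem Anc.trans {a b c : V} (h₁ : F.Anc a b) (h₂ : F.Anc b c) : F.Anc a c :=
  Relation.ReflTransGen.trans h₁ h₂

theorem Anc.antisymm {a b : V} (h₁ : F.Anc a b) (h₂ : F.Anc b a) : a = b := by
  by_contra hne
  rcases Relation.reflTransGen_iff_eq_or_transGen.mp h₁ with h | h
  · exact hne h.symm
  · exact F.wf.transGen.irrefl.irrefl a (Relation.transGen_swap.mp (h.trans_left h₂))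

theorem Anc.total {u a b : V} (ha : F.Anc u a) (hb : F.Anc u b) : F.Anc a b ∨ F.Anc b a :=
  Relation.ReflTransGen.total_of_right_unique
    (fun _ _ _ h h' => Option.some_injective _ (h.symm.trans h')) ha hb

theorem ne_of_anc_of_parent {p c w : V} (hp : F.Anc p c) (hc : F.parent c = some w) : p ≠ w := by
  rintro rfl
  have := hp.antisymm (anc_of_parent hc)
  subst this
  exact F.wf.transGen.irrefl.irrefl p (Relation.TransGen.single hc)

theorem exists_parent_eq_of_anc {u w : V} (h : F.Anc u w) (hne : u ≠ w) :
    ∃ c, F.parent c = some w ∧ F.Anc u c := by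
  rcases Relation.ReflTransGen.cases_tail h with rfl | ⟨c, huc, hcw⟩
  · exact absurd rfl hne
  · exact ⟨c, hcw, huc⟩

theorem eq_of_parent_eq_of_anc {c c' w u : V} (hc : F.parent c = some w)
    (hc' : F.parent c' = some w) (hu : F.Anc u c) (hu' : F.Anc u c') : c = c' := by
  rcases hu.total hu' with h | h
  · rcases Relation.ReflTransGen.cases_head h with rfl | ⟨m, hm, hmc'⟩
    · rfl
    · exact absurd (Option.some_injective _ (hm.symm.trans hc)) (ne_of_anc_of_parent hmc' hc')
  · rcases Relation.ReflTransGen.cases_head h with rfl | ⟨m, hm, hmc⟩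
    · rfl
    · exact absurd (Option.some_injective _ (hm.symm.trans hc')) (ne_of_anc_of_parent hmc hc)

theorem anc_of_anc_of_parent {c w u p : V} (hc : F.parent c = some w) (hu : F.Anc u c)
    (hup : F.Anc u p) (hpw : F.Anc p w) (hpne : p ≠ w) : F.Anc p c := by
  obtain ⟨c₀, hc₀, hpc₀⟩ := exists_parent_eq_of_anc hpw hpne
  exact eq_of_parent_eq_of_anc hc₀ hc (hup.trans hpc₀) hu ▸ hpc₀

theorem eq_of_isLeaf_of_anc {x w : V} (hw : F.IsLeaf w) (h : F.Anc x w) : x = w := by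
  by_contra hne
  obtain ⟨c, hc, -⟩ := exists_parent_eq_of_anc h hne
  exact (Set.eq_empty_iff_forall_notMem.mp hw c) hc

theorem XIncl.mono {c w : V} (h : F.XIncl X c) (hcw : F.Anc c w) : F.XIncl X w :=
  let ⟨x, hx, hxc⟩ := h
  ⟨x, hx, hxc.trans hcw⟩

theorem XBif.xIncl {u : V} (h : F.XBif X u) : F.XIncl X u :=
  let ⟨_, _, _, hc₁, _, hi₁, _⟩ := h
  hi₁.mono (anc_of_parent hc₁)

/-- As `XChild` from the parent of `w`, except that `w` itself may be the tip and the edges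
branching off at `w` are constrained too. -/
def XTip (F : RForest V) (X : Set V) (w u : V) : Prop :=
  F.Anc u w ∧
    (∀ p c, F.parent c = some p → F.Anc u p → F.Anc p w → p ≠ u →
      ¬ F.Anc u c → ¬ F.XIncl X c) ∧
    (u ∈ X ∨ F.XBif X u)

theorem xTip_iff_eq_of_stop (hX : ∀ x ∈ X, F.IsLeaf x) {w u : V} (hw : w ∈ X ∨ F.XBif X w) :
    F.XTip X w u ↔ u = w := by
  constructor
  · rintro ⟨huw, hpath, -⟩
    by_contra hne
    obtain ⟨c, hc, huc⟩ := exists_parent_eq_of_anc huw hne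
    rcases hw with hwX | ⟨c₁, c₂, h12, hc₁, hc₂, hi₁, hi₂⟩
    · exact (Set.eq_empty_iff_forall_notMem.mp (hX w hwX) c) hc
    · have other : ∃ c', F.parent c' = some w ∧ F.XIncl X c' ∧ c' ≠ c := by
        by_cases h : c₁ = c
        · exact ⟨c₂, hc₂, hi₂, h ▸ h12.symm⟩
        · exact ⟨c₁, hc₁, hi₁, h⟩
      obtain ⟨c', hc', hi', hne'⟩ := other
      exact hpath w c' hc' huw .refl (Ne.symm hne)
        (fun h => hne' (eq_of_parent_eq_of_anc hc' hc h huc)) hi'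
  · rintro rfl
    exact ⟨.refl, fun p _ _ hwp hpw hne _ _ => hne (hpw.antisymm hwp), hw⟩

theorem xTip_iff_of_pass {w c u : V} (hw : ¬ (w ∈ X ∨ F.XBif X w))
    (hc : F.parent c = some w) (hci : F.XIncl X c) : F.XTip X w u ↔ F.XTip X c u := by
  have hexcl : ∀ c', F.parent c' = some w → c' ≠ c → ¬ F.XIncl X c' :=
    fun c' hc' hne hi' => hw (Or.inr ⟨c', c, hne, hc', hc, hi', hci⟩)
  constructor
  · rintro ⟨huw, hpath, hu⟩
    have hne : u ≠ w := by rintro rfl; exact hw hu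
    obtain ⟨c₀, hc₀, huc₀⟩ := exists_parent_eq_of_anc huw hne
    have hu_incl : F.XIncl X u := hu.elim (fun h => ⟨u, h, .refl⟩) XBif.xIncl
    obtain rfl : c₀ = c := by
      by_contra h
      exact hexcl c₀ hc₀ h (hu_incl.mono huc₀)
    exact ⟨huc₀, fun p c' hc' hup hpc =>
      hpath p c' hc' hup (hpc.trans (anc_of_parent hc₀)), hu⟩
  · rintro ⟨huc, hpath, hu⟩
    refine ⟨huc.trans (anc_of_parent hc), fun p c' hc' hup hpw hpu hnc' => ?_, hu⟩
    by_cases hpw' : p = w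
    · subst hpw'
      exact hexcl c' hc' (by rintro rfl; exact hnc' huc)
    · exact hpath p c' hc' hup (anc_of_anc_of_parent hc huc hup hpw hpw') hpu hnc'

theorem existsUnique_xTip (hX : ∀ x ∈ X, F.IsLeaf x) {w : V} (hw : F.XIncl X w) :
    ∃! u, F.XTip X w u := by
  obtain ⟨x, hx, hxw⟩ := hw
  induction hxw with
  | refl => exact ⟨x, (xTip_iff_eq_of_stop hX (Or.inl hx)).mpr rfl,
      fun u => (xTip_iff_eq_of_stop hX (Or.inl hx)).mp⟩
  | @tail b c hxb hbc ih =>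
    by_cases hstop : c ∈ X ∨ F.XBif X c
    · exact ⟨c, (xTip_iff_eq_of_stop hX hstop).mpr rfl,
        fun u => (xTip_iff_eq_of_stop hX hstop).mp⟩
    · simpa only [xTip_iff_of_pass hstop hbc ⟨x, hx, hxb⟩] using ih

theorem xChild_iff_exists_xTip {v u : V} :
    F.XChild X v u ↔ ∃ c, F.parent c = some v ∧ F.XTip X c u := by
  constructor
  · rintro ⟨huv, hne, hpath, hu⟩
    obtain ⟨c, hc, huc⟩ := exists_parent_eq_of_anc huv hne
    refine ⟨c, hc, huc, fun p c' hc' hup hpc hpu => ?_, hu⟩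
    exact hpath p c' hc' hup (hpc.trans (anc_of_parent hc)) hpu (ne_of_anc_of_parent hpc hc)
  · rintro ⟨c, hc, huc, hpath, hu⟩
    refine ⟨huc.trans (anc_of_parent hc), ne_of_anc_of_parent huc hc,
      fun p c' hc' hup hpv hpu hpv' => ?_, hu⟩
    exact hpath p c' hc' hup (anc_of_anc_of_parent hc huc hup hpv hpv') hpu

end RForest

/-- In a rooted forest in which every vertex has at most two children, every
`X`-bifurcate vertex has exactly two `X`-children (`X` a set of leaves). -/
theorem stmt_1 {V : Type} [Fintype V] (F : RForest V)
    (hbin : ∀ v : V, (F.children v).ncard ≤ 2)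
    (X : Set V) (hX : ∀ x ∈ X, F.IsLeaf x)
    (v : V) (hv : F.XBif X v) :
    ({u | F.XChild X v u}).ncard = 2 := by
  obtain ⟨c₁, c₂, h12, hc₁, hc₂, hi₁, hi₂⟩ := hv
  have hchildren : F.children v = {c₁, c₂} := by
    refine (Set.eq_of_subset_of_ncard_le ?_ ?_ (Set.toFinite _)).symm
    · rintro c (rfl | rfl) <;> assumption
    · rw [Set.ncard_pair h12]; exact hbin v
  obtain ⟨u₁, hu₁, huniq₁⟩ := RForest.existsUnique_xTip hX hi₁
  obtain ⟨u₂, hu₂, huniq₂⟩ := RForest.existsUnique_xTip hX hi₂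
  have hset : {u | F.XChild X v u} = {u₁, u₂} := by
    ext u
    simp only [Set.mem_ofPred_eq, RForest.xChild_iff_exists_xTip]
    constructor
    · rintro ⟨c, hc, hu⟩
      rcases (hchildren ▸ hc : c ∈ ({c₁, c₂} : Set V)) with rfl | rfl
      exacts [Or.inl (huniq₁ u hu), Or.inr (huniq₂ u hu)]
    · rintro (rfl | rfl)
      exacts [⟨c₁, hc₁, hu₁⟩, ⟨c₂, hc₂, hu₂⟩]
  rw [hset, Set.ncard_pair]
  rintro rfl
  exact h12 (RForest.eq_of_parent_eq_of_anc hc₁ hc₂ hu₁.1 hu₂.1)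
end

section
/- If Y ⊆ L(T), X ⊆ Y, each component of T↑_Y is a dangling subtree of T, and P_Y is a root-leaf path of a Y-search tree extending to a root-leaf path P in a full search tree with C(P_Y) ⊆ C(P), then b(κ, P_Y) ≤ b(κ, P) for any key κ = (X,B,R); hence b_Y(κ) ≤ b_{L(T)}(κ). Abstractly: if C ⊆ C' are edge sets, then |C ∩ A| ≤ |C' ∩ A| for any edge set A, and the number of label-free components of F − ((C \ R) ∪ B) is at most that of F − ((C' \ R) ∪ B). -/
/-! Removing edges only refines the connected components, so every label-free component
of the coarser graph contains a label-free component of the finer one, and distinct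
components contain distinct ones. -/

/-- The number of label-free components of `G - D`: connected components of
`G.deleteEdges D` containing no labeled vertex. -/
noncomputable def nfree {V : Type} [Fintype V] (G : SimpleGraph V)
    (Lbl : Set V) (D : Set (Sym2 V)) : ℕ :=
  Nat.card {K : (G.deleteEdges D).ConnectedComponent //
    ∀ v : V, (G.deleteEdges D).connectedComponentMk v = K → v ∉ Lbl}

open SimpleGraph

theorem SimpleGraph.card_labelFree_connectedComponent_le_of_le {V : Type} [Finite V]
    {G H : SimpleGraph V} (hHG : H ≤ G) (Lbl : Set V) :
    Nat.card {K : G.ConnectedComponent // ∀ v, G.connectedComponentMk v = K → v ∉ Lbl} ≤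
      Nat.card {K : H.ConnectedComponent // ∀ v, H.connectedComponentMk v = K → v ∉ Lbl} := by
  choose rep hrep using fun K : G.ConnectedComponent => K.exists_rep
  have coarsen {v w : V} (hvw : H.connectedComponentMk v = H.connectedComponentMk w) :
      G.connectedComponentMk v = G.connectedComponentMk w :=
    ConnectedComponent.eq.2 ((ConnectedComponent.eq.1 hvw).mono hHG)
  refine Nat.card_le_card_of_injective
    (fun K => ⟨H.connectedComponentMk (rep K), fun v hv => K.2 v (hrep K ▸ coarsen hv)⟩) ?_
  intro K K' hKK'
  apply Subtype.ext
  rw [← hrep K, ← hrep K']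
  exact coarsen (congrArg Subtype.val hKK')

theorem nfree_mono {V : Type} [Fintype V] (G : SimpleGraph V) (Lbl : Set V) :
    Monotone (nfree G Lbl) := fun _ _ hDD' =>
  card_labelFree_connectedComponent_le_of_le (deleteEdges_anti hDD') Lbl

theorem stmt_16_general {V : Type} [Fintype V] (F : SimpleGraph V)
    (Lbl : Set V)
    (B R C C' : Set (Sym2 V)) (hCC' : C ⊆ C') :
    (C ∩ (B ∪ R)).ncard ≤ (C' ∩ (B ∪ R)).ncard ∧
      nfree F Lbl ((C \ R) ∪ B) ≤ nfree F Lbl ((C' \ R) ∪ B) ∧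
      (C ∩ (B ∪ R)).ncard + nfree F Lbl ((C \ R) ∪ B)
        ≤ (C' ∩ (B ∪ R)).ncard + nfree F Lbl ((C' \ R) ∪ B) := by
  have hcut : (C ∩ (B ∪ R)).ncard ≤ (C' ∩ (B ∪ R)).ncard :=
    Set.ncard_le_ncard (Set.inter_subset_inter_left _ hCC')
  have hfree : nfree F Lbl ((C \ R) ∪ B) ≤ nfree F Lbl ((C' \ R) ∪ B) :=
    nfree_mono F Lbl (Set.union_subset_union_left B (Set.sdiff_subset_sdiff_left hCC'))
  exact ⟨hcut, hfree, add_le_add hcut hfree⟩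

/-- Abstraction of Lemma 4 (monotonicity of the lower bound): in a finite
forest `F` with labeled leaves `Lbl`, with fixed edge sets `B` and `R`,
define `b(C) = |C ∩ (B ∪ R)| + #(label-free components of
F − ((C \ R) ∪ B))`.  If `C ⊆ C'`, then `|C ∩ (B ∪ R)| ≤ |C' ∩ (B ∪ R)|`,
the number of label-free components does not decrease, and `b(C) ≤ b(C')`. -/
theorem stmt_16 {V : Type} [Fintype V] (F : SimpleGraph V)
    (hF : F.IsAcyclic) (Lbl : Set V)
    (B R C C' : Set (Sym2 V)) (hCC' : C ⊆ C') :
    (C ∩ (B ∪ R)).ncard ≤ (C' ∩ (B ∪ R)).ncard ∧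
      nfree F Lbl ((C \ R) ∪ B) ≤ nfree F Lbl ((C' \ R) ∪ B) ∧
      (C ∩ (B ∪ R)).ncard + nfree F Lbl ((C \ R) ∪ B)
        ≤ (C' ∩ (B ∪ R)).ncard + nfree F Lbl ((C' \ R) ∪ B) :=
  stmt_16_general F Lbl B R C C' hCC'
end
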